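/- Let P ∈ R be irreducible and let λ₀, λ₁, λ₂, λ₃ be complex numbers such that D(P) = (λ₀Y₀ + λ₁Y₁ + λ₂Y₂ + λ₃)·P. Then λ₀, λ₁ and λ₂ are rational numbers. -/

import Mathlib

/-!
The planes `Yᵢ = Yⱼ` are invariant, and inside the plane `Y₀ = Y₁` the restricted field has
an invariant line `Y₂ = t Y₀` for every root of `t² - t = m (1 - t)³`, where
`m = (b + c) / 4 = (1 - e²) / 4` with `e = γ - α - β`; two of these roots, `1` and
`(|e| - 1) / (|e| + 1)`, are rational. Dividing a Darboux polynomial by the largest power of an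
invariant linear form and restricting to the zero set of that form leaves a nonzero Darboux
polynomial whose cofactor is shifted by an integer multiple of the form's cofactor. On such a line
the field is `Y₀' = κ Y₀²`, and comparing top coefficients in `Y₀` forces the cofactor to be
`κ · deg_{Y₀}`. So `λ₀ + λ₁ + t λ₂ ∈ ℚ` for both roots, whence `λ₂, λ₀ + λ₁ ∈ ℚ`; the symmetry
`Y₁ ↔ Y₂`, which exchanges `a` and `b`, gives `λ₁ ∈ ℚ`.
-/

open MvPolynomial

/-- In `R = ℂ[T,Q,Y₀,Y₁,Y₂]` (variables `X 0 = T`, `X 1 = Q`, `X 2 = Y₀`, `X 3 = Y₁`,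
`X 4 = Y₂`), the polynomial `L = (1/4)(a(Y₀−Y₁)² + b(Y₀−Y₂)² + c(Y₁−Y₂)²)`. -/
noncomputable def Lpoly5 (a b c : ℂ) : MvPolynomial (Fin 5) ℂ :=
  C (1 / 4 : ℂ) * (C a * (X 2 - X 3) ^ 2 + C b * (X 2 - X 4) ^ 2 + C c * (X 3 - X 4) ^ 2)

namespace Derivation

variable {R A B : Type*} [CommRing R] [CommRing A] [CommRing B] [Algebra R A] [Algebra R B]

noncomputable def conjAlgEquiv (e : A ≃ₐ[R] B) (D : Derivation R A A) : Derivation R B B :=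
  Derivation.mk' (e.toLinearMap ∘ₗ D.toLinearMap ∘ₗ e.symm.toLinearMap) fun x y => by
    simp

@[simp]
lemma conjAlgEquiv_apply (e : A ≃ₐ[R] B) (D : Derivation R A A) (x : B) :
    D.conjAlgEquiv e x = e (D (e.symm x)) := rfl

lemma exists_eq_pow_mul_of_apply_eq_mul [IsDomain A] [WfDvdMonoid A] (D : Derivation R A A)
    {ℓ Λ F Γ : A} (hℓ0 : ℓ ≠ 0) (hℓu : ¬IsUnit ℓ) (hDℓ : D ℓ = Λ * ℓ) (hF : F ≠ 0)
    (hDF : D F = Γ * F) :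
    ∃ (k : ℕ) (H : A), ¬ℓ ∣ H ∧ F = ℓ ^ k * H ∧ D H = (Γ - k * Λ) * H := by
  obtain ⟨k, H, hH, rfl⟩ := WfDvdMonoid.max_power_factor' hF hℓu
  refine ⟨k, H, hH, rfl, mul_left_cancel₀ (pow_ne_zero k hℓ0) ?_⟩
  have hDpow : D (ℓ ^ k) = k * Λ * ℓ ^ k := by
    rcases k with _ | k
    · simp
    · rw [leibniz_pow, hDℓ, nsmul_eq_mul, smul_eq_mul]; push_cast; ring
  have hexpand : D (ℓ ^ k * H) = ℓ ^ k * D H + H * (k * Λ * ℓ ^ k) := by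
    rw [leibniz, hDpow, smul_eq_mul, smul_eq_mul]
  linear_combination hDF - hexpand

end Derivation

namespace MvPolynomial

section Substitution

variable {σ R : Type*} [CommRing R]

lemma map_derivation_eq_add_pderiv_mul {A : Type*} [CommRing A] [Algebra R A]
    (π : MvPolynomial σ R →ₐ[R] A) (D : Derivation R (MvPolynomial σ R) (MvPolynomial σ R))
    (D' : Derivation R A A) (j : σ) (h : ∀ i ≠ j, π (D (X i)) = D' (π (X i)))
    (p : MvPolynomial σ R) :
    π (D p) = D' (π p) + π (pderiv j p) * (π (D (X j)) - D' (π (X j))) := by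
  classical
  induction p using MvPolynomial.induction_on with
  | C a => simp [← algebraMap_eq]
  | add p q hp hq => simp only [map_add, hp, hq]; ring
  | mul_X p i hp =>
    simp only [Derivation.leibniz, smul_eq_mul, map_add, map_mul, hp, pderiv_X]
    rcases eq_or_ne i j with rfl | hij
    · simp; ring
    · simp [Pi.single_eq_of_ne hij, h i hij]; ring

variable [DecidableEq σ]

noncomputable def substX (j : σ) (f : MvPolynomial σ R) :
    MvPolynomial σ R →ₐ[R] MvPolynomial σ R :=
  aeval (Function.update X j f)

variable {j : σ} {f : MvPolynomial σ R}

@[simp]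
lemma substX_X_self : substX j f (X j) = f := by simp [substX]

@[simp]
lemma substX_X_of_ne {i : σ} (h : i ≠ j) : substX j f (X i) = X i := by
  simp [substX, Function.update_of_ne h]

lemma substX_eq_self {p : MvPolynomial σ R} (hp : j ∉ p.vars) : substX j f p = p := by
  refine hom_congr_vars (f₁ := (substX j f : MvPolynomial σ R →+* MvPolynomial σ R))
    (f₂ := RingHom.id _) (RingHom.ext fun r => by simp [substX]) (fun i hi _ => ?_) rfl
  exact substX_X_of_ne (ne_of_mem_of_not_mem hi hp)

lemma X_sub_dvd_sub_substX (p : MvPolynomial σ R) : X j - f ∣ p - substX j f p := by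
  rw [← Ideal.mem_span_singleton, ← Ideal.Quotient.eq, ← Ideal.Quotient.mkₐ_eq_mk R,
    ← AlgHom.comp_apply]
  congr 1
  refine (algHom_ext fun i => ?_).symm
  rcases eq_or_ne i j with rfl | hij
  · rw [AlgHom.comp_apply, substX_X_self, Ideal.Quotient.mkₐ_eq_mk, Ideal.Quotient.eq,
      Ideal.mem_span_singleton]
    exact ⟨-1, by ring⟩
  · simp [hij]

lemma substX_X_sub (hf : j ∉ f.vars) : substX j f (X j - f) = 0 := by
  rw [map_sub, substX_X_self, substX_eq_self hf, sub_self]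

/-- The derivation that `D` induces on the hypersurface `X j = f`, written in the coordinates
`X i`, `i ≠ j`; its value `0` on `X j` is immaterial, as the image of `substX j f` does not
involve `X j` when `f` does not. -/
noncomputable def substDerivation (D : Derivation R (MvPolynomial σ R) (MvPolynomial σ R))
    (j : σ) (f : MvPolynomial σ R) : Derivation R (MvPolynomial σ R) (MvPolynomial σ R) :=
  mkDerivation R (Function.update (fun i => substX j f (D (X i))) j 0)

lemma substDerivation_X_of_ne (D : Derivation R (MvPolynomial σ R) (MvPolynomial σ R))
    {i : σ} (h : i ≠ j) : substDerivation D j f (X i) = substX j f (D (X i)) := by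
  simp [substDerivation, mkDerivation_X, Function.update_of_ne h]

@[simp]
lemma substDerivation_X_self (D : Derivation R (MvPolynomial σ R) (MvPolynomial σ R)) :
    substDerivation D j f (X j) = 0 := by
  simp [substDerivation, mkDerivation_X]

lemma substX_derivation (D : Derivation R (MvPolynomial σ R) (MvPolynomial σ R))
    (hf : j ∉ f.vars) (hD : X j - f ∣ D (X j - f)) (p : MvPolynomial σ R) :
    substX j f (D p) = substDerivation D j f (substX j f p) := by
  have hcomm := map_derivation_eq_add_pderiv_mul (substX j f) D (substDerivation D j f) j
    fun i hi => by rw [substX_X_of_ne hi, substDerivation_X_of_ne D hi]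
  -- at `p = f`, where `pderiv j f = 0`, the defect at `X j` becomes `substX j f (D (X j - f))`
  have hdefect : substX j f (D (X j)) - substDerivation D j f (substX j f (X j)) = 0 := by
    obtain ⟨c, hc⟩ := hD
    have hfix := hcomm f
    rw [pderiv_eq_zero_of_notMem_vars hf, map_zero, zero_mul, add_zero, substX_eq_self hf]
      at hfix
    rw [substX_X_self, ← hfix, ← map_sub, ← map_sub, hc, map_mul, substX_X_sub hf, zero_mul]
  rw [hcomm p, hdefect, mul_zero, add_zero]

lemma exists_substDerivation_apply_eq_mul {K : Type*} [Field K] {j : σ} {f : MvPolynomial σ K}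
    (D : Derivation K (MvPolynomial σ K) (MvPolynomial σ K)) {Λ F Γ : MvPolynomial σ K}
    (hf : j ∉ f.vars) (hDℓ : D (X j - f) = Λ * (X j - f)) (hF : F ≠ 0) (hDF : D F = Γ * F) :
    ∃ (k : ℕ) (G : MvPolynomial σ K), G ≠ 0 ∧
      substDerivation D j f G = substX j f (Γ - k * Λ) * G := by
  have hℓ0 : X j - f ≠ 0 := fun h => hf <| by
    rw [← sub_eq_zero.mp h, vars_X]; exact Finset.mem_singleton_self j
  have hℓu : ¬IsUnit (X j - f) := fun h => by
    simpa [substX_X_sub hf] using h.map (substX j f)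
  obtain ⟨k, H, hH, -, hDH⟩ :=
    D.exists_eq_pow_mul_of_apply_eq_mul hℓ0 hℓu hDℓ hF hDF
  refine ⟨k, substX j f H, fun h0 => hH ?_, ?_⟩
  · simpa [h0] using X_sub_dvd_sub_substX (j := j) (f := f) H
  · rw [← substX_derivation D hf ⟨Λ, by rw [hDℓ, mul_comm]⟩, hDH, map_mul]

end Substitution

section DegreeOf

variable {σ R : Type*} [CommRing R]

lemma coeff_X_mul_pderiv (j : σ) (ν : σ →₀ ℕ) (p : MvPolynomial σ R) :
    coeff ν (X j * pderiv j p) = ν j * coeff ν p := by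
  classical
  induction p using MvPolynomial.induction_on' with
  | add p q hp hq => simp only [map_add, mul_add, coeff_add, hp, hq]
  | monomial μ a =>
    rw [X_mul_pderiv_monomial, coeff_smul, coeff_monomial]
    split_ifs with h
    · subst h; simp [nsmul_eq_mul]
    · simp

lemma degreeOf_pderiv_le (i j : σ) (p : MvPolynomial σ R) :
    degreeOf j (pderiv i p) ≤ degreeOf j p := by
  classical
  refine degreeOf_le_iff.mpr fun ν hν => ?_
  have hcoeff : coeff (ν + Finsupp.single i 1) p ≠ 0 := by
    intro h0
    rw [mem_support_iff, coeff_pderiv, h0, zero_mul] at hν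
    exact hν rfl
  exact (Finsupp.le_def.mp le_self_add j).trans
    (monomial_le_degreeOf j (mem_support_iff.mpr hcoeff))

lemma coeff_eq_zero_of_degreeOf_lt {j : σ} {ν : σ →₀ ℕ} {p : MvPolynomial σ R}
    (h : degreeOf j p < ν j) : coeff ν p = 0 :=
  notMem_support_iff.mp fun hν => absurd h (not_lt.mpr (monomial_le_degreeOf j hν))

lemma derivation_eq_sum_mul_pderiv [Fintype σ]
    (D : Derivation R (MvPolynomial σ R) (MvPolynomial σ R)) (p : MvPolynomial σ R) :
    D p = ∑ i, D (X i) * pderiv i p := by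
  classical
  have hsum : ∀ (E : σ → Derivation R (MvPolynomial σ R) (MvPolynomial σ R)) q,
      (∑ i, E i) q = ∑ i, E i q := fun E q => by
    rw [← Derivation.coeFnAddMonoidHom_apply, map_sum, Finset.sum_apply]; rfl
  have hD : D = ∑ i, D (X i) • pderiv i :=
    derivation_ext fun j => by simp [hsum, pderiv_X, Pi.single_apply]
  conv_lhs => rw [hD]
  simp [hsum]

lemma eq_mul_degreeOf_of_derivation_apply_eq_mul [Fintype σ] {K : Type*} [Field K]
    (D : Derivation K (MvPolynomial σ K) (MvPolynomial σ K)) {j : σ} {κ s r : K}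
    (hj : D (X j) = C κ * X j ^ 2) (hi : ∀ i ≠ j, degreeOf j (D (X i)) = 0)
    {G : MvPolynomial σ K} (hG : G ≠ 0) (hDG : D G = (C s * X j + C r) * G) :
    s = κ * degreeOf j G := by
  classical
  obtain ⟨ν, hνG, hνj⟩ : ∃ ν ∈ G.support, degreeOf j G = ν j := by
    rw [degreeOf_eq_sup]
    exact Finset.exists_mem_eq_sup _ (support_nonempty.mpr hG) _
  -- compare the coefficients of the monomial `ν · X j`, one degree above `G` in `X j`
  have htop : ∀ p : MvPolynomial σ K, degreeOf j p ≤ ν j →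
      coeff (ν + Finsupp.single j 1) p = 0 := fun p hp =>
    coeff_eq_zero_of_degreeOf_lt (j := j) (by simp; omega)
  have hlhs : coeff (ν + Finsupp.single j 1) (D G) = κ * (ν j * coeff ν G) := by
    rw [derivation_eq_sum_mul_pderiv, coeff_sum, Finset.sum_eq_single j]
    · rw [hj, show C κ * X j ^ 2 * pderiv j G = C κ * (X j * (X j * pderiv j G)) by ring,
        coeff_C_mul, add_comm, coeff_X_mul, coeff_X_mul_pderiv]
    · refine fun i _ hij => htop _ ((degreeOf_mul_le _ _ _).trans ?_)
      rw [hi i hij, zero_add, ← hνj]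
      exact degreeOf_pderiv_le i j G
    · simp
  have hrhs : coeff (ν + Finsupp.single j 1) ((C s * X j + C r) * G) = s * coeff ν G := by
    rw [add_mul, coeff_add, mul_assoc, coeff_C_mul, coeff_C_mul, htop G hνj.le, add_comm ν,
      coeff_X_mul, mul_zero, add_zero]
  have hν0 : coeff ν G ≠ 0 := mem_support_iff.mp hνG
  rw [hνj]
  refine mul_right_cancel₀ hν0 ?_
  rw [← hrhs, ← hDG, hlhs]
  ring

end DegreeOf

end MvPolynomial

local notation "𝓡" => MvPolynomial (Fin 5) ℂ

structure IsHalphen (D : Derivation ℂ 𝓡 𝓡) (w a b c : ℂ) : Prop where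
  map_T : D (X 0) = C w
  map_Q : D (X 1) = C w * X 1
  map_Y₀ : D (X 2) = X 2 ^ 2 - Lpoly5 a b c
  map_Y₁ : D (X 3) = X 3 ^ 2 - Lpoly5 a b c
  map_Y₂ : D (X 4) = X 4 ^ 2 - Lpoly5 a b c

/-- The restriction of the field to the invariant plane `Y₀ = Y₁`, in the coordinates
`(T, Q, Y₀, ·, Y₂)`; there `L` becomes `m (Y₀ - Y₂)²` with `m = (b + c) / 4`. -/
noncomputable def planeDerivation (w m : ℂ) : Derivation ℂ 𝓡 𝓡 :=
  mkDerivation ℂ ![C w, C w * X 1, X 2 ^ 2 - C m * (X 2 - X 4) ^ 2, 0,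
    X 4 ^ 2 - C m * (X 2 - X 4) ^ 2]

lemma IsHalphen.conj_swap {D : Derivation ℂ 𝓡 𝓡} {w a b c : ℂ} (hD : IsHalphen D w a b c) :
    IsHalphen (D.conjAlgEquiv (renameEquiv ℂ (Equiv.swap 3 4))) w b a c := by
  have hL : rename (Equiv.swap (3 : Fin 5) 4) (Lpoly5 a b c) = Lpoly5 b a c := by
    simp [Lpoly5, Equiv.swap_apply_of_ne_of_ne]; ring
  constructor <;> simp [Equiv.swap_apply_of_ne_of_ne, hD.map_T, hD.map_Q, hD.map_Y₀, hD.map_Y₁,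
    hD.map_Y₂, hL]

lemma IsHalphen.exists_planeDerivation_apply_eq_mul {D : Derivation ℂ 𝓡 𝓡} {w a b c : ℂ}
    (hD : IsHalphen D w a b c) {P : 𝓡} (hP : P ≠ 0) {l₀ l₁ l₂ l₃ : ℂ}
    (hDP : D P = (C l₀ * X 2 + C l₁ * X 3 + C l₂ * X 4 + C l₃) * P) :
    ∃ (k : ℕ) (P₁ : 𝓡), P₁ ≠ 0 ∧ planeDerivation w ((b + c) / 4) P₁ =
      (C (l₀ + l₁ - 2 * k) * X 2 + C l₂ * X 4 + C l₃) * P₁ := by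
  have hplane : D (X 3 - X 2) = (X 3 + X 2) * (X 3 - X 2) := by
    rw [map_sub, hD.map_Y₁, hD.map_Y₀]; ring
  obtain ⟨k, G, hG, hDG⟩ := exists_substDerivation_apply_eq_mul D (by simp) hplane hP hDP
  have hrestrict : substDerivation D 3 (X 2) = planeDerivation w ((b + c) / 4) := by
    refine derivation_ext fun i => ?_
    have hC : (C ((b + c) / 4) : 𝓡) = C (1 / 4) * (C b + C c) := by
      rw [← C_add, ← C_mul]; ring_nf
    fin_cases i <;> simp [substDerivation_X_of_ne, hD.map_T, hD.map_Q, hD.map_Y₀, hD.map_Y₂,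
      planeDerivation, Lpoly5, hC] <;> ring
  refine ⟨k, G, hG, ?_⟩
  rw [← hrestrict, hDG]
  congr 1
  simp [map_sub, map_mul, map_ofNat]
  ring

lemma exists_nat_of_planeDerivation_apply_eq_mul {w m t l₀ l₂ l₃ : ℂ}
    (hroot : t ^ 2 - t = m * (1 - t) ^ 3) {P : 𝓡} (hP : P ≠ 0)
    (hDP : planeDerivation w m P = (C l₀ * X 2 + C l₂ * X 4 + C l₃) * P) :
    ∃ n k : ℕ, l₀ + t * l₂ = n * (1 - m * (1 - t) ^ 2) + 2 * k * (t + m * (1 - t) ^ 2) := by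
  set c₂ := 1 - (1 - t) * m
  set c₁ := t * c₂ + 2 * (1 - t) * m
  have hrootC : (C t : 𝓡) ^ 2 - C t = C m * (1 - C t) ^ 3 := by
    simpa using congrArg (C : ℂ → 𝓡) hroot
  have hline : planeDerivation w m (X 4 - C t * X 2) =
      (C c₁ * X 2 + C c₂ * X 4) * (X 4 - C t * X 2) := by
    simp [planeDerivation, c₁, c₂, map_ofNat]
    linear_combination (X 2 : 𝓡) ^ 2 * hrootC
  obtain ⟨k, G, hG, hDG⟩ := exists_substDerivation_apply_eq_mul _
    (fun h => by simpa using vars_mul _ _ h) hline hP hDP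
  set D₂ := substDerivation (planeDerivation w m) 4 (C t * X 2)
  have hY : D₂ (X 2) = C (1 - m * (1 - t) ^ 2) * X 2 ^ 2 := by
    simp [D₂, substDerivation_X_of_ne, planeDerivation]; ring
  have hother : ∀ i ≠ 2, degreeOf 2 (D₂ (X i)) = 0 := by
    intro i hi
    fin_cases i <;> simp_all [D₂, substDerivation_X_of_ne, planeDerivation, degreeOf_C,
      degreeOf_mul_X_of_ne]
  have hcof : substX 4 (C t * X 2)
      (C l₀ * X 2 + C l₂ * X 4 + C l₃ - (k : 𝓡) * (C c₁ * X 2 + C c₂ * X 4))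
      = C (l₀ + t * l₂ - k * (c₁ + t * c₂)) * X 2 + C l₃ := by
    simp [map_natCast]; ring
  have hdeg := eq_mul_degreeOf_of_derivation_apply_eq_mul D₂ hY hother hG (hcof ▸ hDG)
  exact ⟨degreeOf 2 G, k, by linear_combination hdeg⟩

lemma IsHalphen.exists_rat_cofactor {D : Derivation ℂ 𝓡 𝓡} {w a b c : ℂ}
    (hD : IsHalphen D w a b c) {e : ℚ} (hbc : b + c = 1 - (e : ℂ) ^ 2) {P : 𝓡} (hP : P ≠ 0)
    {l₀ l₁ l₂ l₃ : ℂ} (hDP : D P = (C l₀ * X 2 + C l₁ * X 3 + C l₂ * X 4 + C l₃) * P) :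
    (∃ r : ℚ, l₂ = r) ∧ ∃ r : ℚ, l₀ + l₁ = r := by
  obtain ⟨k, P₁, hP₁, hDP₁⟩ := hD.exists_planeDerivation_apply_eq_mul hP hDP
  set m : ℚ := (1 - e ^ 2) / 4
  rw [show (b + c) / 4 = (m : ℂ) by push_cast [m]; rw [hbc]] at hDP₁
  set t : ℚ := (|e| - 1) / (|e| + 1)
  have he : |e| + 1 ≠ 0 := by positivity
  have ht : t ^ 2 - t = m * (1 - t) ^ 3 := by
    simp only [t, m, ← sq_abs e]; field_simp; ring
  have ht1 : 1 - t ≠ 0 := by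
    rw [show 1 - t = 2 / (|e| + 1) by simp only [t]; field_simp; ring]
    positivity
  obtain ⟨n₁, k₁, h₁⟩ := exists_nat_of_planeDerivation_apply_eq_mul (t := 1) (by ring) hP₁ hDP₁
  obtain ⟨n₂, k₂, h₂⟩ := exists_nat_of_planeDerivation_apply_eq_mul (t := t)
    (by exact_mod_cast ht) hP₁ hDP₁
  set q₁ : ℚ := n₁ + 2 * k₁
  set q₂ : ℚ := n₂ * (1 - m * (1 - t) ^ 2) + 2 * k₂ * (t + m * (1 - t) ^ 2)
  set r : ℚ := (q₁ - q₂) / (1 - t)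
  have hl₂ : l₂ = r := by
    have hdiff : (1 - (t : ℂ)) * l₂ = q₁ - q₂ := by
      push_cast [q₁, q₂]; linear_combination h₁ - h₂
    push_cast [r]
    rw [eq_div_iff (by exact_mod_cast ht1)]
    linear_combination hdiff
  exact ⟨⟨r, hl₂⟩, q₁ + 2 * k - r, by push_cast [q₁]; linear_combination h₁ - hl₂⟩

theorem stmt_8_general (α β γ : ℚ)
    (a b c w : ℂ)
    (ha : a = (γ : ℂ) * (1 - (α : ℂ) - (β : ℂ)) + 2 * (α : ℂ) * (β : ℂ))
    (hb : b = ((α : ℂ) + (β : ℂ)) * ((γ : ℂ) - (α : ℂ) - (β : ℂ)) +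
        2 * (α : ℂ) * (β : ℂ) - (γ : ℂ) + 1)
    (hc : c = (γ : ℂ) * ((α : ℂ) + (β : ℂ) - (γ : ℂ) + 1) - 2 * (α : ℂ) * (β : ℂ))
    (D : Derivation ℂ (MvPolynomial (Fin 5) ℂ) (MvPolynomial (Fin 5) ℂ))
    (hDT : D (X 0) = C w)
    (hDQ : D (X 1) = C w * X 1)
    (hDY0 : D (X 2) = (X 2) ^ 2 - Lpoly5 a b c)
    (hDY1 : D (X 3) = (X 3) ^ 2 - Lpoly5 a b c)
    (hDY2 : D (X 4) = (X 4) ^ 2 - Lpoly5 a b c)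
    (P : MvPolynomial (Fin 5) ℂ) (hP : Irreducible P) (l₀ l₁ l₂ l₃ : ℂ)
    (hDP : D P = (C l₀ * X 2 + C l₁ * X 3 + C l₂ * X 4 + C l₃) * P) :
    (∃ r : ℚ, l₀ = (r : ℂ)) ∧ (∃ r : ℚ, l₁ = (r : ℂ)) ∧ (∃ r : ℚ, l₂ = (r : ℂ)) := by
  have hD : IsHalphen D w a b c := ⟨hDT, hDQ, hDY0, hDY1, hDY2⟩
  obtain ⟨⟨r₂, hr₂⟩, r₀₁, hr₀₁⟩ := hD.exists_rat_cofactor (e := γ - α - β)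
    (by rw [hb, hc]; push_cast; ring) hP.ne_zero hDP
  set ρ := renameEquiv ℂ (Equiv.swap (3 : Fin 5) 4)
  have hρP : ρ P ≠ 0 := (map_ne_zero_iff _ ρ.injective).mpr hP.ne_zero
  have hDρP : D.conjAlgEquiv ρ (ρ P) = (C l₀ * X 2 + C l₂ * X 3 + C l₁ * X 4 + C l₃) * ρ P := by
    rw [Derivation.conjAlgEquiv_apply, AlgEquiv.symm_apply_apply, hDP, map_mul]
    congr 1
    simp [ρ, Equiv.swap_apply_of_ne_of_ne]
    ring
  obtain ⟨⟨r₁, hr₁⟩, -⟩ := hD.conj_swap.exists_rat_cofactor (e := 1 - γ)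
    (by rw [ha, hc]; push_cast; ring) hρP hDρP
  exact ⟨⟨r₀₁ - r₁, by push_cast; linear_combination hr₀₁ - hr₁⟩, ⟨r₁, hr₁⟩, r₂, hr₂⟩

/-- if `P ∈ R` is irreducible and `D P = (λ₀Y₀ + λ₁Y₁ + λ₂Y₂ + λ₃)·P`, then
`λ₀, λ₁, λ₂` are rational numbers. -/
theorem stmt_8 (α β γ : ℚ)
    (hα : ∃ n : ℕ, 0 < n ∧ α = 1 / n) (hβ : ∃ n : ℕ, 0 < n ∧ β = 1 / n)
    (hγ : ∃ n : ℕ, 0 < n ∧ γ = 1 / n)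
    (h0 : 0 < α) (h1 : α < β) (h2 : β < γ) (h3 : γ < 1) (h4 : α + β < γ)
    (a b c w : ℂ)
    (ha : a = (γ : ℂ) * (1 - (α : ℂ) - (β : ℂ)) + 2 * (α : ℂ) * (β : ℂ))
    (hb : b = ((α : ℂ) + (β : ℂ)) * ((γ : ℂ) - (α : ℂ) - (β : ℂ)) +
        2 * (α : ℂ) * (β : ℂ) - (γ : ℂ) + 1)
    (hc : c = (γ : ℂ) * ((α : ℂ) + (β : ℂ) - (γ : ℂ) + 1) - 2 * (α : ℂ) * (β : ℂ))
    (hw : w = 1 - (γ : ℂ))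
    (D : Derivation ℂ (MvPolynomial (Fin 5) ℂ) (MvPolynomial (Fin 5) ℂ))
    (hDT : D (X 0) = C w)
    (hDQ : D (X 1) = C w * X 1)
    (hDY0 : D (X 2) = (X 2) ^ 2 - Lpoly5 a b c)
    (hDY1 : D (X 3) = (X 3) ^ 2 - Lpoly5 a b c)
    (hDY2 : D (X 4) = (X 4) ^ 2 - Lpoly5 a b c)
    (P : MvPolynomial (Fin 5) ℂ) (hP : Irreducible P) (l₀ l₁ l₂ l₃ : ℂ)
    (hDP : D P = (C l₀ * X 2 + C l₁ * X 3 + C l₂ * X 4 + C l₃) * P) :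
    (∃ r : ℚ, l₀ = (r : ℂ)) ∧ (∃ r : ℚ, l₁ = (r : ℂ)) ∧ (∃ r : ℚ, l₂ = (r : ℂ)) :=
  stmt_8_general α β γ a b c w ha hb hc D hDT hDQ hDY0 hDY1 hDY2 P hP l₀ l₁ l₂ l₃ hDP
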